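/- Let p be a prime and let m < n be positive integers. Then every γ ∈ SL₂(ℤ/pⁿℤ) with γ ≡ I (mod p^{min(2m,n)}) (i.e. all entries of γ − I are divisible by p^{min(2m,n)}) can be written as γ = u₁ ℓ₁ u₂ ℓ₂ u₃, where each uᵢ is an upper unitriangular matrix (1, b; 0, 1) with b ∈ p^m ℤ/pⁿℤ and each ℓᵢ is a lower unitriangular matrix (1, 0; c, 1) with c ∈ p^m ℤ/pⁿℤ. -/

import Mathlib

/-!
If `γ = (a b; c d)` has `a` a unit, then `γ = (a 0; c a⁻¹) · (1 b/a; 0 1)`, and the lower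
triangular factor is `u(x) ℓ(y) u(-x/a) ℓ((c - y)a)` for any factorization `a - 1 = x y`.
When `a ≡ 1 (mod p^{2m})` we may take `x, y ∈ p^m ℤ/pⁿℤ`; when moreover `p^m` divides `b` and
`c`, every off-diagonal entry lies in `p^m ℤ/pⁿℤ`. In `ℤ/pⁿℤ`, since `pⁿ = 0`, the congruence
`γ ≡ I (mod p^{min(2m,n)})` is the congruence mod `p^{2m}`, and it makes `a` a unit.
-/

open Matrix

/-- An upper unitriangular matrix in `SL₂(ℤ/pⁿℤ)` whose off–diagonal entry lies in
`p^m ℤ/pⁿℤ`. -/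
def IsUpperUniPow (p n m : ℕ) (u : Matrix.SpecialLinearGroup (Fin 2) (ZMod (p ^ n))) : Prop :=
  (u : Matrix (Fin 2) (Fin 2) (ZMod (p ^ n))) 0 0 = 1 ∧
  (u : Matrix (Fin 2) (Fin 2) (ZMod (p ^ n))) 1 1 = 1 ∧
  (u : Matrix (Fin 2) (Fin 2) (ZMod (p ^ n))) 1 0 = 0 ∧
  ((p : ZMod (p ^ n)) ^ m) ∣ (u : Matrix (Fin 2) (Fin 2) (ZMod (p ^ n))) 0 1

/-- A lower unitriangular matrix in `SL₂(ℤ/pⁿℤ)` whose off–diagonal entry lies in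
`p^m ℤ/pⁿℤ`. -/
def IsLowerUniPow (p n m : ℕ) (l : Matrix.SpecialLinearGroup (Fin 2) (ZMod (p ^ n))) : Prop :=
  (l : Matrix (Fin 2) (Fin 2) (ZMod (p ^ n))) 0 0 = 1 ∧
  (l : Matrix (Fin 2) (Fin 2) (ZMod (p ^ n))) 1 1 = 1 ∧
  (l : Matrix (Fin 2) (Fin 2) (ZMod (p ^ n))) 0 1 = 0 ∧
  ((p : ZMod (p ^ n)) ^ m) ∣ (l : Matrix (Fin 2) (Fin 2) (ZMod (p ^ n))) 1 0

lemma pow_dvd_of_pow_min_dvd {M : Type*} [MonoidWithZero M] {a x : M} {k n : ℕ}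
    (ha : a ^ n = 0) (h : a ^ min k n ∣ x) : a ^ k ∣ x := by
  rcases le_total k n with hkn | hnk
  · rwa [min_eq_left hkn] at h
  · rw [min_eq_right hnk, ha, zero_dvd_iff] at h
    exact h ▸ dvd_zero _

section CommRing

variable {R : Type*} [CommRing R]

lemma IsNilpotent.isUnit_of_dvd_sub_one {Q a : R} (hQ : IsNilpotent Q) (h : Q ∣ a - 1) :
    IsUnit a := by
  obtain ⟨r, hr⟩ := h
  have hnil : IsNilpotent (a - 1) := hr ▸ (Commute.all Q r).isNilpotent_mul_right hQ
  simpa using hnil.isUnit_add_one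

lemma fin_two_eq_lowerTriangular_mul_upperUnitriangular {a a' b c d : R} (ha : a * a' = 1)
    (hdet : a * d - b * c = 1) :
    !![a, b; c, d] = !![a, 0; c, a'] * !![1, b * a'; 0, 1] := by
  rw [mul_fin_two]
  ext i j
  fin_cases i <;> fin_cases j <;> simp
  · linear_combination (-b) * ha
  · linear_combination (-d) * ha + a' * hdet

lemma lowerTriangular_eq_upper_mul_lower_mul_upper_mul_lower {a a' x y : R} (c : R)
    (ha : a * a' = 1) (hxy : x * y = a - 1) :
    !![a, 0; c, a'] =
      !![1, x; 0, 1] * !![1, 0; y, 1] * !![1, -x * a'; 0, 1] * !![1, 0; (c - y) * a, 1] := by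
  simp only [mul_fin_two]
  ext i j
  fin_cases i <;> fin_cases j <;> simp
  · linear_combination (-1 + (c - y) * a * x * a') * hxy + (c - y) * a * x * ha
  · linear_combination x * ha + x * a' * hxy
  · linear_combination (c - y) * hxy + (c - y) * x * y * ha
  · linear_combination a' * hxy + ha

namespace Matrix.SpecialLinearGroup

def upperUnitriangular (x : R) : SpecialLinearGroup (Fin 2) R :=
  ⟨!![1, x; 0, 1], by simp [det_fin_two_of]⟩

def lowerUnitriangular (y : R) : SpecialLinearGroup (Fin 2) R :=
  ⟨!![1, 0; y, 1], by simp [det_fin_two_of]⟩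

theorem exists_eq_upper_mul_lower_mul_upper_mul_lower_mul_upper {Q : R}
    (γ : SpecialLinearGroup (Fin 2) R) (hunit : IsUnit (γ 0 0)) (h00 : Q ^ 2 ∣ γ 0 0 - 1)
    (h01 : Q ∣ γ 0 1) (h10 : Q ∣ γ 1 0) :
    ∃ x₁ x₂ x₃ y₁ y₂ : R, Q ∣ x₁ ∧ Q ∣ x₂ ∧ Q ∣ x₃ ∧ Q ∣ y₁ ∧ Q ∣ y₂ ∧
      γ = upperUnitriangular x₁ * lowerUnitriangular y₁ * upperUnitriangular x₂ *
        lowerUnitriangular y₂ * upperUnitriangular x₃ := by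
  obtain ⟨a', ha⟩ := hunit.exists_right_inv
  obtain ⟨α, hα⟩ := h00
  have hxy : Q * α * Q = γ 0 0 - 1 := by rw [hα]; ring
  have hdet : γ 0 0 * γ 1 1 - γ 0 1 * γ 1 0 = 1 := by rw [← det_fin_two]; exact γ.det_coe
  refine ⟨Q * α, -(Q * α) * a', γ 0 1 * a', Q, (γ 1 0 - Q) * γ 0 0, dvd_mul_right Q α,
    ((dvd_mul_right Q α).neg_right).mul_right a', h01.mul_right a', dvd_rfl,
    (dvd_sub h10 dvd_rfl).mul_right _, Subtype.ext ((eta_fin_two _).trans ?_)⟩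
  rw [fin_two_eq_lowerTriangular_mul_upperUnitriangular ha hdet,
    lowerTriangular_eq_upper_mul_lower_mul_upper_mul_lower _ ha hxy]
  rfl

end Matrix.SpecialLinearGroup

end CommRing

open Matrix.SpecialLinearGroup

lemma isUpperUniPow_upperUnitriangular {p n m : ℕ} {x : ZMod (p ^ n)}
    (hx : (p : ZMod (p ^ n)) ^ m ∣ x) : IsUpperUniPow p n m (upperUnitriangular x) := by
  simp [IsUpperUniPow, upperUnitriangular, hx]

lemma isLowerUniPow_lowerUnitriangular {p n m : ℕ} {y : ZMod (p ^ n)}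
    (hy : (p : ZMod (p ^ n)) ^ m ∣ y) : IsLowerUniPow p n m (lowerUnitriangular y) := by
  simp [IsLowerUniPow, lowerUnitriangular, hy]

theorem statement6_general (p : ℕ) (m n : ℕ) (hm : 0 < m)
    (γ : Matrix.SpecialLinearGroup (Fin 2) (ZMod (p ^ n)))
    (hγ : ∀ i j, ((p : ZMod (p ^ n)) ^ min (2 * m) n) ∣
      ((γ : Matrix (Fin 2) (Fin 2) (ZMod (p ^ n))) i j -
        (1 : Matrix (Fin 2) (Fin 2) (ZMod (p ^ n))) i j)) :
    ∃ u₁ u₂ u₃ l₁ l₂ : Matrix.SpecialLinearGroup (Fin 2) (ZMod (p ^ n)),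
      IsUpperUniPow p n m u₁ ∧ IsUpperUniPow p n m u₂ ∧ IsUpperUniPow p n m u₃ ∧
      IsLowerUniPow p n m l₁ ∧ IsLowerUniPow p n m l₂ ∧
      γ = u₁ * l₁ * u₂ * l₂ * u₃ := by
  set Q : ZMod (p ^ n) := (p : ZMod (p ^ n)) ^ m
  have hpn : (p : ZMod (p ^ n)) ^ n = 0 := by exact_mod_cast ZMod.natCast_self (p ^ n)
  have hQ : IsNilpotent Q :=
    ⟨n, by rw [← pow_mul]; exact pow_eq_zero_of_le (Nat.le_mul_of_pos_left n hm) hpn⟩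
  have hQ2 (i j : Fin 2) : Q ^ 2 ∣ γ i j - (1 : Matrix (Fin 2) (Fin 2) _) i j := by
    rw [← pow_mul, mul_comm]
    exact pow_dvd_of_pow_min_dvd hpn (hγ i j)
  have hQ_dvd_Q2 : Q ∣ Q ^ 2 := dvd_pow_self Q two_ne_zero
  have h00 : Q ^ 2 ∣ γ 0 0 - 1 := by simpa using hQ2 0 0
  obtain ⟨x₁, x₂, x₃, y₁, y₂, hx₁, hx₂, hx₃, hy₁, hy₂, rfl⟩ :=
    exists_eq_upper_mul_lower_mul_upper_mul_lower_mul_upper γ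
      (hQ.isUnit_of_dvd_sub_one (hQ_dvd_Q2.trans h00)) h00
      (hQ_dvd_Q2.trans (by simpa using hQ2 0 1)) (hQ_dvd_Q2.trans (by simpa using hQ2 1 0))
  exact ⟨_, _, _, _, _, isUpperUniPow_upperUnitriangular hx₁,
    isUpperUniPow_upperUnitriangular hx₂, isUpperUniPow_upperUnitriangular hx₃,
    isLowerUniPow_lowerUnitriangular hy₁, isLowerUniPow_lowerUnitriangular hy₂, rfl⟩

/-- Every element of `SL₂(ℤ/pⁿℤ)` congruent to the identity
mod `p^{min(2m,n)}` is a product `u₁ℓ₁u₂ℓ₂u₃` of unitriangular matrices with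
off-diagonal entries divisible by `p^m`. -/
theorem statement6 (p : ℕ) (hp : p.Prime) (m n : ℕ) (hm : 0 < m) (hmn : m < n)
    (γ : Matrix.SpecialLinearGroup (Fin 2) (ZMod (p ^ n)))
    (hγ : ∀ i j, ((p : ZMod (p ^ n)) ^ min (2 * m) n) ∣
      ((γ : Matrix (Fin 2) (Fin 2) (ZMod (p ^ n))) i j -
        (1 : Matrix (Fin 2) (Fin 2) (ZMod (p ^ n))) i j)) :
    ∃ u₁ u₂ u₃ l₁ l₂ : Matrix.SpecialLinearGroup (Fin 2) (ZMod (p ^ n)),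
      IsUpperUniPow p n m u₁ ∧ IsUpperUniPow p n m u₂ ∧ IsUpperUniPow p n m u₃ ∧
      IsLowerUniPow p n m l₁ ∧ IsLowerUniPow p n m l₂ ∧
      γ = u₁ * l₁ * u₂ * l₂ * u₃ :=
  statement6_general p m n hm γ hγ
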